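/- (Corollary 2, radix-M generator.) Let M ≥ 2, K ≥ 1, let π be a permutation of {0,…,K−1}, and let U⁽⁰⁾, …, U⁽ᴷ⁾ be arbitrary M×M complex matrices. Define the matrix polynomial P(X) = U⁽⁰⁾ · ∏_{k=0}^{K−1} ( D⁽ᵏ⁾(X) · U⁽ᵏ⁺¹⁾ ) over ℂ[X], where D⁽ᵏ⁾(X) is the diagonal matrix with diagonal entries X^{m·M^{π(k)}} for m = 0,…,M−1. Then for all r, s ∈ {0,…,M−1} and every n with 0 ≤ n ≤ M^K − 1, the coefficient of X^n in the (r,s) entry of P equals the scalar product U⁽⁰⁾_{r, d_{π(0)}(n)} · ( ∏_{k=1}^{K−1} U⁽ᵏ⁾_{d_{π(k−1)}(n), d_{π(k)}(n)} ) · U⁽ᴷ⁾_{d_{π(K−1)}(n), s}, where d_k(n) denotes the k-th digit of the radix-M expansion of n. -/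

import Mathlib

/-!
Expanding the matrix product along paths `r → p 0 → ⋯ → p (K - 1) → s`, the `(r, s)` entry of
`P` is `∑ₚ (weight of p) · X ^ (∑ₖ p k · M ^ σ k)`. Because `σ` permutes the place values, the
exponent map `p ↦ ∑ₖ p k · M ^ σ k` is a bijection onto `[0, M ^ K)` (a radix-`M` expansion with
permuted digits), so each coefficient is the weight of exactly one path, namely `p k = d_{σ k}(n)`.
-/

open Matrix Polynomial

/-- The `k`-th digit of the radix-`M` expansion of `n`, as an element of `Fin M`. -/
def fdig (M : ℕ) (hM : 0 < M) (k n : ℕ) : Fin M :=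
  ⟨n / M ^ k % M, Nat.mod_lt _ hM⟩

section Paths

variable {R : Type*} [CommSemiring R] {M : ℕ}

/-- `pathWeight U K r s p = U 0 r (p 0) * U 1 (p 0) (p 1) * ⋯ * U K (p (K - 1)) s`. -/
def pathWeight (U : ℕ → Matrix (Fin M) (Fin M) R) : (K : ℕ) → Fin M → Fin M → (Fin K → Fin M) → R
  | 0, r, s, _ => U 0 r s
  | K + 1, r, s, p => pathWeight U K r (p (Fin.last K)) (Fin.init p) * U (K + 1) (p (Fin.last K)) s

theorem pathWeight_map {S : Type*} [CommSemiring S] (f : R →+* S)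
    (U : ℕ → Matrix (Fin M) (Fin M) R) (K : ℕ) (r s : Fin M) (p : Fin K → Fin M) :
    pathWeight (fun k => (U k).map f) K r s p = f (pathWeight U K r s p) := by
  induction K generalizing s with
  | zero => rfl
  | succ K ih => simp only [pathWeight, ih, map_mul, map_apply]

theorem pathWeight_eq_prod (U : ℕ → Matrix (Fin M) (Fin M) R) {K : ℕ} (hK : 1 ≤ K)
    (r s : Fin M) (q : ℕ → Fin M) :
    pathWeight U K r s (fun k => q k) =
      U 0 r (q 0) * (∏ k ∈ Finset.Ico 1 K, U k (q (k - 1)) (q k)) * U K (q (K - 1)) s := by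
  induction K, hK using Nat.le_induction generalizing s with
  | base => simp [pathWeight]
  | succ K hK ih =>
    rw [pathWeight, Finset.prod_Ico_succ_top hK]
    simp only [Fin.val_last, Nat.add_sub_cancel]
    rw [show (Fin.init fun k : Fin (K + 1) => q k) = fun k : Fin K => q k from rfl, ih]
    obtain ⟨K, rfl⟩ := Nat.exists_eq_add_of_le' hK
    simp only [Nat.add_sub_cancel]
    ring

theorem mul_prod_diagonal_mul_apply (U : ℕ → Matrix (Fin M) (Fin M) R) (d : ℕ → Fin M → R)
    (K : ℕ) (r s : Fin M) :
    (U 0 * ((List.range K).map fun k => diagonal (d k) * U (k + 1)).prod) r s =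
      ∑ p : Fin K → Fin M, pathWeight U K r s p * ∏ k : Fin K, d k (p k) := by
  induction K generalizing s with
  | zero => simp [pathWeight]
  | succ K ih =>
    rw [List.range_succ, List.map_append, List.prod_append, ← Matrix.mul_assoc, mul_apply,
      ← (Fin.snocEquiv fun _ => Fin M).sum_comp, Fintype.sum_prod_type]
    refine Finset.sum_congr rfl fun t _ => ?_
    simp only [List.map_cons, List.map_nil, List.prod_cons, List.prod_nil, Matrix.mul_one,
      diagonal_mul, ih, Finset.sum_mul, Fin.snocEquiv, Equiv.coe_fn_mk, pathWeight, Fin.snoc_last,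
      Fin.init_snoc, Fin.prod_univ_castSucc, Fin.snoc_castSucc, Fin.val_last, Fin.val_castSucc]
    refine Finset.sum_congr rfl fun p _ => ?_
    ring

theorem map_C_mul_prod_diagonal_X_pow_mul_apply (U : ℕ → Matrix (Fin M) (Fin M) R) (w : ℕ → ℕ)
    (K : ℕ) (r s : Fin M) :
    ((U 0).map C * ((List.range K).map fun k =>
        diagonal (fun m : Fin M => (X : R[X]) ^ ((m : ℕ) * w k)) * (U (k + 1)).map C).prod) r s =
      ∑ p : Fin K → Fin M, C (pathWeight U K r s p) * X ^ ∑ k : Fin K, (p k : ℕ) * w k := by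
  simp only [mul_prod_diagonal_mul_apply (fun k => (U k).map C), pathWeight_map,
    Finset.prod_pow_eq_pow_sum]

end Paths

theorem coeff_sum_C_mul_X_pow_equiv {R ι : Type*} [Semiring R] [Fintype ι] {N : ℕ}
    (e : ι ≃ Fin N) (c : ι → R) (n : Fin N) :
    (∑ i, C (c i) * X ^ (e i : ℕ)).coeff n = c (e.symm n) := by
  rw [← e.symm.sum_comp, finsetSum_coeff]
  simp only [Equiv.apply_symm_apply, coeff_C_mul_X_pow, Fin.val_inj, Finset.sum_ite_eq,
    Finset.mem_univ, if_true]

section PermDigits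

variable (M : ℕ) {K : ℕ} (τ : Equiv.Perm (Fin K))

def permDigitsEquiv : (Fin K → Fin M) ≃ Fin (M ^ K) :=
  (τ.arrowCongr (Equiv.refl _)).trans finFunctionFinEquiv

theorem permDigitsEquiv_apply_val (p : Fin K → Fin M) :
    (permDigitsEquiv M τ p : ℕ) = ∑ k, (p k : ℕ) * M ^ (τ k : ℕ) := by
  rw [permDigitsEquiv, Equiv.trans_apply, finFunctionFinEquiv_apply, ← Equiv.sum_comp τ]
  simp [Equiv.arrowCongr_apply]

theorem permDigitsEquiv_symm_apply_val (a : Fin (M ^ K)) (k : Fin K) :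
    ((permDigitsEquiv M τ).symm a k : ℕ) = a / M ^ (τ k : ℕ) % M := by
  simp [permDigitsEquiv, Equiv.arrowCongr_apply]

end PermDigits

theorem Set.BijOn.exists_perm_fin {K : ℕ} {σ : ℕ → ℕ}
    (hσ : Set.BijOn σ (Set.Iio K) (Set.Iio K)) :
    ∃ τ : Equiv.Perm (Fin K), ∀ k : Fin K, (τ k : ℕ) = σ k := by
  let τ : Fin K → Fin K := fun k => ⟨σ k, hσ.mapsTo k.2⟩
  have hτ : Function.Injective τ := fun i j hij =>
    Fin.ext (hσ.injOn i.2 j.2 (congrArg Fin.val hij))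
  exact ⟨Equiv.ofBijective τ (Finite.injective_iff_bijective.mp hτ), fun _ => rfl⟩

/-- **Corollary 2, radix-M generator.** The coefficient of `Xⁿ`
in the `(r,s)` entry of the standard-delay generating matrix equals the
product of matrix entries
`U⁽⁰⁾_{r,d_{σ(0)}(n)} · ∏_{k=1}^{K-1} U⁽ᵏ⁾_{d_{σ(k-1)}(n),d_{σ(k)}(n)} · U⁽ᴷ⁾_{d_{σ(K-1)}(n),s}`. -/
theorem radix_M_generator
    (M K : ℕ) (hM : 2 ≤ M) (hK : 1 ≤ K)
    (σ : ℕ → ℕ) (hσ : Set.BijOn σ (Set.Iio K) (Set.Iio K))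
    (U : ℕ → Matrix (Fin M) (Fin M) ℂ)
    (P : Matrix (Fin M) (Fin M) (Polynomial ℂ))
    (hP : P = (U 0).map Polynomial.C *
      ((List.range K).map (fun k =>
        Matrix.diagonal (fun m : Fin M => (Polynomial.X : Polynomial ℂ) ^ ((m : ℕ) * M ^ σ k)) *
          (U (k + 1)).map Polynomial.C)).prod) :
    ∀ r s : Fin M, ∀ n : ℕ, n ≤ M ^ K - 1 →
      (P r s).coeff n =
        U 0 r (fdig M (by omega) (σ 0) n) *
          (∏ k ∈ Finset.Ico 1 K,
            U k (fdig M (by omega) (σ (k - 1)) n) (fdig M (by omega) (σ k) n)) *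
          U K (fdig M (by omega) (σ (K - 1)) n) s := by
  intro r s n hn
  obtain ⟨τ, hτ⟩ := hσ.exists_perm_fin
  have hnK : n < M ^ K := by have : 0 < M ^ K := Nat.pow_pos (by omega); omega
  have hdigits :
      (permDigitsEquiv M τ).symm ⟨n, hnK⟩ = fun k : Fin K => fdig M (by omega) (σ k) n :=
    funext fun k => Fin.ext (by rw [permDigitsEquiv_symm_apply_val, hτ]; rfl)
  subst hP
  simp only [map_C_mul_prod_diagonal_X_pow_mul_apply, ← hτ, ← permDigitsEquiv_apply_val]
  rw [coeff_sum_C_mul_X_pow_equiv _ _ ⟨n, hnK⟩, hdigits]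
  exact pathWeight_eq_prod U hK r s fun k => fdig M (by omega) (σ k) n
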